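/- In the radial-kernel setting, for any x, y ∈ 𝒵 the geodesic distance in ℳ between φ(x) and φ(y) equals (−2h′(0))^{1/2} ‖x − y‖; in particular it is proportional to the Euclidean distance between x and y. -/

import Mathlib

open Set
open scoped ENNReal BigOperators

noncomputable section

/-- The real Hilbert space ℓ² of square-summable real sequences. -/
abbrev l2 : Type := lp (fun _ : ℕ => ℝ) 2

/-- A partition `0 = t₀ ≤ t₁ ≤ … ≤ t_n = 1` of `[0,1]`. -/
structure GeodPartition where
  n : ℕ
  t : ℕ → ℝ
  first : t 0 = 0
  last : t n = 1
  mono : ∀ k, k < n → t k ≤ t (k + 1)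

/-- The set of points of a partition. -/
def GeodPartition.points (P : GeodPartition) : Set ℝ := {x | ∃ k ≤ P.n, P.t k = x}

/-- `χ(γ, 𝒫) = ∑ₖ ‖γ_{t_k} − γ_{t_{k−1}}‖`. -/
def chiSum {E : Type*} [NormedAddCommGroup E] (γ : ℝ → E) (P : GeodPartition) : ℝ :=
  ∑ k ∈ Finset.range P.n, ‖γ (P.t (k + 1)) - γ (P.t k)‖

/-- The length of a path: the supremum over all partitions of `χ(γ, 𝒫)`. -/
def pathLength {E : Type*} [NormedAddCommGroup E] (γ : ℝ → E) : ℝ≥0∞ :=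
  ⨆ P : GeodPartition, ENNReal.ofReal (chiSum γ P)

/-- A path in `S` with end-points `a, b`: a continuous map `γ : [0,1] → S`
with `γ 0 = a` and `γ 1 = b`. -/
def IsPathIn {E : Type*} [NormedAddCommGroup E] (S : Set E) (a b : E) (γ : ℝ → E) : Prop :=
  ContinuousOn γ (Icc 0 1) ∧ (∀ t ∈ Icc (0:ℝ) 1, γ t ∈ S) ∧ γ 0 = a ∧ γ 1 = b

/-- Geodesic distance in `S`: the infimum of path-lengths over paths in `S` joining `a, b`. -/
def geodesicDist {E : Type*} [NormedAddCommGroup E] (S : Set E) (a b : E) : ℝ≥0∞ :=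
  ⨅ γ : {γ : ℝ → E // IsPathIn S a b γ}, pathLength γ.val

/-- Monotonicity of partition points. -/
lemma GeodPartition.t_le_t (P : GeodPartition) {i j : ℕ} (hij : i ≤ j) (hj : j ≤ P.n) :
    P.t i ≤ P.t j := by
  induction j with
  | zero => obtain rfl : i = 0 := Nat.le_zero.mp hij; exact le_rfl
  | succ m ih =>
    rcases Nat.lt_or_ge i (m + 1) with hlt | hge
    · exact le_trans (ih (Nat.lt_succ_iff.mp hlt) (by omega)) (P.mono m (by omega))
    · obtain rfl : i = m + 1 := le_antisymm hij hge
      exact le_rfl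

/-- All partition points lie in `[0,1]`. -/
lemma GeodPartition.t_mem (P : GeodPartition) {k : ℕ} (hk : k ≤ P.n) : P.t k ∈ Icc (0:ℝ) 1 := by
  refine ⟨?_, ?_⟩
  · rw [← P.first]; exact P.t_le_t (Nat.zero_le k) hk
  · rw [← P.last]; exact P.t_le_t hk le_rfl

set_option maxHeartbeats 1600000 in
/-- Proposition 1, second part. Radial kernels `f(x,y) = h(‖x−y‖²)`
with `h′(0) < 0`: for `x, y ∈ 𝒵`, the geodesic distance in `ℳ` between `φ(x)` and `φ(y)`
equals `(−2h′(0))^{1/2} ‖x − y‖`, proportional to Euclidean distance. -/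
theorem radial_kernel_geodesic_distance
    {d : ℕ} (hd : 1 ≤ d)
    (Z : Set (EuclideanSpace ℝ (Fin d))) (hZ : IsCompact Z) (hZconv : Convex ℝ Z)
    (h : ℝ → ℝ)
    (hC2 : ContDiff ℝ 2 (fun u : EuclideanSpace ℝ (Fin d) => h (‖u‖ ^ 2)))
    (hdiff : DifferentiableAt ℝ h 0) (hneg : deriv h 0 < 0)
    (φ : EuclideanSpace ℝ (Fin d) → l2)
    (hφ : ∀ x ∈ Z, ∀ y ∈ Z, (inner ℝ (φ x) (φ y) : ℝ) = h (‖x - y‖ ^ 2))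
    -- Assumption 1
    (hA1 : ∀ x ∈ Z, ∀ y ∈ Z, x ≠ y →
      ∃ a ∈ Z, h (‖x - a‖ ^ 2) ≠ h (‖y - a‖ ^ 2))
    (x : EuclideanSpace ℝ (Fin d)) (hx : x ∈ Z)
    (y : EuclideanSpace ℝ (Fin d)) (hy : y ∈ Z) :
    geodesicDist (φ '' Z) (φ x) (φ y) =
      ENNReal.ofReal (Real.sqrt (-2 * deriv h 0) * ‖x - y‖) := by
  set c : ℝ := -2 * deriv h 0 with hcdef
  have hkc : Continuous (fun u : EuclideanSpace ℝ (Fin d) => h (‖u‖ ^ 2)) := hC2.continuous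
  -- The pairwise distance formula in feature space
  have hnormsq : ∀ u ∈ Z, ∀ v ∈ Z, ‖φ u - φ v‖ ^ 2 = 2 * h 0 - 2 * h (‖u - v‖ ^ 2) := by
    intro u hu v hv
    have h1 : (inner ℝ (φ u) (φ u) : ℝ) = h 0 := by simpa using hφ u hu u hu
    have h2 : (inner ℝ (φ v) (φ v) : ℝ) = h 0 := by simpa using hφ v hv v hv
    have h3 := hφ u hu v hv
    have e1 : ‖φ u‖ ^ 2 = (inner ℝ (φ u) (φ u) : ℝ) := (real_inner_self_eq_norm_sq _).symm
    have e2 : ‖φ v‖ ^ 2 = (inner ℝ (φ v) (φ v) : ℝ) := (real_inner_self_eq_norm_sq _).symm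
    rw [norm_sub_sq_real, e1, e2, h1, h2, h3]; ring
  -- Two-sided chord bounds for short chords, from differentiability of h at 0
  have chord : ∀ ε : ℝ, 0 < ε → ∃ r₀ > 0, ∀ u ∈ Z, ∀ v ∈ Z, ‖u - v‖ ^ 2 ≤ r₀ →
      Real.sqrt (c - 2*ε) * ‖u - v‖ ≤ ‖φ u - φ v‖ ∧
      ‖φ u - φ v‖ ≤ Real.sqrt (c + 2*ε) * ‖u - v‖ := by
    intro ε hε
    have hder : HasDerivAt h (deriv h 0) 0 := hdiff.hasDerivAt
    have hlo := hasDerivAt_iff_isLittleO.mp hder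
    have hev := (Asymptotics.isLittleO_iff.mp hlo) hε
    obtain ⟨δ, hδ, hball⟩ := Metric.eventually_nhds_iff.mp hev
    refine ⟨δ/2, by linarith, ?_⟩
    intro u hu v hv hr
    have hr0 : (0:ℝ) ≤ ‖u - v‖ ^ 2 := sq_nonneg _
    have hrδ : dist (‖u - v‖ ^ 2) 0 < δ := by
      rw [Real.dist_eq, sub_zero, abs_of_nonneg hr0]; linarith
    have hkey := hball hrδ
    have hkey' : |h (‖u - v‖^2) - h 0 - ‖u - v‖^2 * deriv h 0| ≤ ε * ‖u - v‖^2 := by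
      simpa [Real.norm_eq_abs, abs_of_nonneg hr0] using hkey
    have habs := abs_le.mp hkey'
    have hsq := hnormsq u hu v hv
    constructor
    · rcases le_or_gt (c - 2*ε) 0 with hng | hps
      · have : Real.sqrt (c - 2*ε) = 0 := Real.sqrt_eq_zero_of_nonpos hng
        rw [this, zero_mul]; exact norm_nonneg _
      · have h1 : (c - 2*ε) * ‖u - v‖^2 ≤ ‖φ u - φ v‖ ^ 2 := by
          rw [hsq, hcdef]; nlinarith [habs.1, habs.2]
        have h2 := Real.sqrt_le_sqrt h1
        rwa [Real.sqrt_sq (norm_nonneg _), Real.sqrt_mul hps.le, Real.sqrt_sq (norm_nonneg _)] at h2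
    · have h1 : ‖φ u - φ v‖ ^ 2 ≤ (c + 2*ε) * ‖u - v‖^2 := by
        rw [hsq, hcdef]; nlinarith [habs.1, habs.2]
      have h2 := Real.sqrt_le_sqrt h1
      rwa [Real.sqrt_sq (norm_nonneg _), Real.sqrt_mul (by linarith : (0:ℝ) ≤ c + 2*ε),
        Real.sqrt_sq (norm_nonneg _)] at h2
  -- Injectivity of φ on Z (Assumption 1)
  have hinj : ∀ u ∈ Z, ∀ v ∈ Z, φ u = φ v → u = v := by
    intro u hu v hv he
    by_contra hne
    obtain ⟨a, ha, hfa⟩ := hA1 u hu v hv hne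
    apply hfa
    rw [← hφ u hu a ha, ← hφ v hv a ha, he]
  ---- Upper bound: the straight-line path
  set p : ℝ → EuclideanSpace ℝ (Fin d) := fun t => x + t • (y - x) with hpdef
  have hpZ : ∀ t ∈ Icc (0:ℝ) 1, p t ∈ Z := fun t ht => hZconv.add_smul_sub_mem hx hy ht
  have hpnorm : ∀ s t : ℝ, ‖p t - p s‖ = |t - s| * ‖x - y‖ := by
    intro s t
    have : p t - p s = (t - s) • (y - x) := by rw [hpdef]; module
    rw [this, norm_smul, Real.norm_eq_abs, norm_sub_rev]
  have hp0 : p 0 = x := by simp [hpdef]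
  have hp1 : p 1 = y := by simp [hpdef]
  -- Sub-interval estimate via fine subdivision of the segment
  have intervalU : ∀ ε : ℝ, 0 < ε → ∀ a b : ℝ, 0 ≤ a → a ≤ b → b ≤ 1 →
      ‖φ (p b) - φ (p a)‖ ≤ Real.sqrt (c + 2*ε) * ((b - a) * ‖x - y‖) := by
    intro ε hε a b ha hab hb
    obtain ⟨r₀, hr₀, hch⟩ := chord ε hε
    obtain ⟨m, hm⟩ := exists_nat_gt (‖x - y‖ / Real.sqrt r₀)
    have hs0 : 0 < Real.sqrt r₀ := Real.sqrt_pos.mpr hr₀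
    have hm0 : 0 < (m:ℝ) := lt_of_le_of_lt (div_nonneg (norm_nonneg _) hs0.le) hm
    have hxy_m : ‖x - y‖ / m < Real.sqrt r₀ := by
      rw [div_lt_iff₀ hm0]
      calc ‖x - y‖ < m * Real.sqrt r₀ := by rwa [div_lt_iff₀ hs0] at hm
        _ = Real.sqrt r₀ * m := mul_comm _ _
    set Δ : ℝ := (b - a) / m with hΔdef
    have hΔ0 : 0 ≤ Δ := div_nonneg (by linarith) hm0.le
    set q : ℕ → EuclideanSpace ℝ (Fin d) := fun j => p (a + j * Δ) with hqdef
    have hq0 : q 0 = p a := by simp [hqdef]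
    have hqm : q m = p b := by
      have : a + m * Δ = b := by rw [hΔdef]; field_simp; ring
      simp [hqdef, this]
    have hpar : ∀ j : ℕ, j ≤ m → a + j * Δ ∈ Icc (0:ℝ) 1 := by
      intro j hj
      have hjm : (j:ℝ) ≤ m := Nat.cast_le.mpr hj
      constructor
      · positivity
      · have : (j:ℝ) * Δ ≤ m * Δ := mul_le_mul_of_nonneg_right hjm hΔ0
        have hb' : a + m * Δ = b := by rw [hΔdef]; field_simp; ring
        nlinarith
    have hqZ : ∀ j : ℕ, j ≤ m → q j ∈ Z := fun j hj => hpZ _ (hpar j hj)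
    have hqstep : ∀ j : ℕ, ‖q (j+1) - q j‖ = Δ * ‖x - y‖ := by
      intro j
      rw [hqdef]
      show ‖p (a + (j+1 : ℕ) * Δ) - p (a + j * Δ)‖ = Δ * ‖x - y‖
      rw [hpnorm]
      congr 1
      have : (a + ((j:ℝ)+1) * Δ) - (a + j * Δ) = Δ := by ring
      rw [show ((j+1 : ℕ):ℝ) = (j:ℝ) + 1 by push_cast; ring, this, abs_of_nonneg hΔ0]
    have hqsq : ∀ j : ℕ, ‖q (j+1) - q j‖ ^ 2 ≤ r₀ := by
      intro j
      rw [hqstep j]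
      have h1 : Δ * ‖x - y‖ ≤ ‖x - y‖ / m := by
        rw [hΔdef, div_mul_eq_mul_div, div_le_div_iff₀ hm0 hm0]
        nlinarith [mul_nonneg (mul_nonneg (by linarith : (0:ℝ) ≤ 1 - (b - a))
          (norm_nonneg (x - y))) hm0.le]
      have h2 : Δ * ‖x - y‖ ≤ Real.sqrt r₀ := le_trans h1 hxy_m.le
      nlinarith [Real.sq_sqrt hr₀.le, mul_nonneg hΔ0 (norm_nonneg (x - y))]
    have hmR : (m:ℝ) ≠ 0 := hm0.ne'
    have htel : φ (p b) - φ (p a) = ∑ j ∈ Finset.range m, (φ (q (j+1)) - φ (q j)) := by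
      rw [Finset.sum_range_sub (fun j => φ (q j)), hqm, hq0]
    calc ‖φ (p b) - φ (p a)‖ = ‖∑ j ∈ Finset.range m, (φ (q (j+1)) - φ (q j))‖ := by rw [htel]
      _ ≤ ∑ j ∈ Finset.range m, ‖φ (q (j+1)) - φ (q j)‖ := norm_sum_le _ _
      _ ≤ ∑ j ∈ Finset.range m, Real.sqrt (c + 2*ε) * (Δ * ‖x - y‖) := by
          refine Finset.sum_le_sum fun j hj => ?_
          have hjm := Finset.mem_range.mp hj
          have := (hch _ (hqZ (j+1) hjm) _ (hqZ j hjm.le) (hqsq j)).2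
          rwa [hqstep j] at this
      _ = m * (Real.sqrt (c + 2*ε) * (Δ * ‖x - y‖)) := by
          simp [Finset.sum_const, Finset.card_range, nsmul_eq_mul]
      _ = Real.sqrt (c + 2*ε) * ((b - a) * ‖x - y‖) := by
          rw [hΔdef]; field_simp; try ring
  -- The straight-line path in feature space and its length bound
  have hupper : ∃ γ₀ : ℝ → l2, IsPathIn (φ '' Z) (φ x) (φ y) γ₀ ∧
      pathLength γ₀ ≤ ENNReal.ofReal (Real.sqrt c * ‖x - y‖) := by
    refine ⟨fun t => φ (p t), ⟨?_, fun t ht => ⟨p t, hpZ t ht, rfl⟩,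
      show φ (p 0) = φ x by rw [hp0], show φ (p 1) = φ y by rw [hp1]⟩, ?_⟩
    · -- continuity via a Lipschitz bound
      have hK : LipschitzOnWith (Real.toNNReal (Real.sqrt (c + 2*1) * ‖x - y‖))
          (fun t => φ (p t)) (Icc 0 1) := by
        apply LipschitzOnWith.of_dist_le_mul
        intro t ht s hs
        have key : ∀ a b : ℝ, a ∈ Icc (0:ℝ) 1 → b ∈ Icc (0:ℝ) 1 → a ≤ b →
            dist (φ (p b)) (φ (p a)) ≤ (Real.sqrt (c + 2*1) * ‖x - y‖) * dist b a := by
          intro a b ha hb hab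
          rw [dist_eq_norm, Real.dist_eq, abs_of_nonneg (by linarith : (0:ℝ) ≤ b - a)]
          calc ‖φ (p b) - φ (p a)‖ ≤ Real.sqrt (c + 2*1) * ((b - a) * ‖x - y‖) :=
                intervalU 1 one_pos a b ha.1 hab hb.2
            _ = Real.sqrt (c + 2*1) * ‖x - y‖ * (b - a) := by ring
        have hcoe : ((Real.toNNReal (Real.sqrt (c + 2*1) * ‖x - y‖) : NNReal) : ℝ)
            = Real.sqrt (c + 2*1) * ‖x - y‖ :=
          Real.coe_toNNReal _ (by positivity)
        rcases le_total s t with hst | hst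
        · rw [hcoe]; exact key s t hs ht hst
        · rw [hcoe, dist_comm (φ (p t)), dist_comm t s]; exact key t s ht hs hst
      exact hK.continuousOn
    · -- the length bound
      have hub : ∀ ε : ℝ, 0 < ε →
          pathLength (fun t => φ (p t)) ≤ ENNReal.ofReal (Real.sqrt (c + 2*ε) * ‖x - y‖) := by
        intro ε hε
        refine iSup_le fun P => ENNReal.ofReal_le_ofReal ?_
        have hterm : ∀ k ∈ Finset.range P.n,
            ‖φ (p (P.t (k+1))) - φ (p (P.t k))‖
              ≤ Real.sqrt (c + 2*ε) * ((P.t (k+1) - P.t k) * ‖x - y‖) := by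
          intro k hk
          have hk' := Finset.mem_range.mp hk
          exact intervalU ε hε _ _ (P.t_mem hk'.le).1 (P.mono k hk') (P.t_mem hk').2
        calc chiSum (fun t => φ (p t)) P
            ≤ ∑ k ∈ Finset.range P.n, Real.sqrt (c + 2*ε) * ((P.t (k+1) - P.t k) * ‖x - y‖) :=
              Finset.sum_le_sum hterm
          _ = Real.sqrt (c + 2*ε) * ‖x - y‖ * ∑ k ∈ Finset.range P.n, (P.t (k+1) - P.t k) := by
              rw [Finset.mul_sum]; exact Finset.sum_congr rfl fun k _ => by ring
          _ = Real.sqrt (c + 2*ε) * ‖x - y‖ := by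
              rw [Finset.sum_range_sub P.t, P.last, P.first]; ring
      have htends : Filter.Tendsto (fun ε : ℝ => ENNReal.ofReal (Real.sqrt (c + 2*ε) * ‖x - y‖))
          (nhdsWithin 0 (Ioi 0)) (nhds (ENNReal.ofReal (Real.sqrt c * ‖x - y‖))) := by
        have hcont : Continuous fun ε : ℝ => ENNReal.ofReal (Real.sqrt (c + 2*ε) * ‖x - y‖) :=
          ENNReal.continuous_ofReal.comp
            ((Real.continuous_sqrt.comp
              (continuous_const.add (continuous_const.mul continuous_id))).mul continuous_const)
        have h2 := (hcont.tendsto 0).mono_left (nhdsWithin_le_nhds (s := Ioi (0:ℝ)))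
        simpa using h2
      refine ge_of_tendsto htends ?_
      filter_upwards [self_mem_nhdsWithin] with ε hε using hub ε hε
  ---- Lower bound: every path has length at least √c ‖x − y‖
  have hlow : ∀ γ : ℝ → l2, IsPathIn (φ '' Z) (φ x) (φ y) γ →
      ENNReal.ofReal (Real.sqrt c * ‖x - y‖) ≤ pathLength γ := by
    intro γ hγ
    obtain ⟨hγc, hγS, hγ0, hγ1⟩ := hγ
    have hgcont : Continuous (fun pr : (EuclideanSpace ℝ (Fin d)) × (EuclideanSpace ℝ (Fin d)) =>
        Real.sqrt (2 * h 0 - 2 * h (‖pr.1 - pr.2‖ ^ 2))) :=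
      Real.continuous_sqrt.comp
        (continuous_const.sub (continuous_const.mul (hkc.comp (continuous_fst.sub continuous_snd))))
    have hgeq : ∀ u ∈ Z, ∀ v ∈ Z, ‖φ u - φ v‖ = Real.sqrt (2 * h 0 - 2 * h (‖u - v‖ ^ 2)) := by
      intro u hu v hv
      rw [← hnormsq u hu v hv, Real.sqrt_sq (norm_nonneg _)]
    have key : ∀ ε : ℝ, 0 < ε →
        ENNReal.ofReal (Real.sqrt (c - 2*ε) * ‖x - y‖) ≤ pathLength γ := by
      intro ε hε
      obtain ⟨r₀, hr₀, hch⟩ := chord ε hε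
      set s₀ := Real.sqrt r₀ with hs₀def
      have hs₀ : 0 < s₀ := Real.sqrt_pos.mpr hr₀
      -- uniform injectivity: small image distance forces small distance
      have hrho : ∃ ρ > 0, ∀ u ∈ Z, ∀ v ∈ Z, ‖φ u - φ v‖ < ρ → ‖u - v‖ ≤ s₀ := by
        set K := (Z ×ˢ Z) ∩ {pr : (EuclideanSpace ℝ (Fin d)) × (EuclideanSpace ℝ (Fin d)) |
          s₀ ≤ ‖pr.1 - pr.2‖} with hKdef
        have hKcomp : IsCompact K :=
          (hZ.prod hZ).inter_right (isClosed_le continuous_const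
            ((continuous_fst.sub continuous_snd).norm))
        rcases K.eq_empty_or_nonempty with hKe | hKne
        · refine ⟨1, one_pos, fun u hu v hv _ => ?_⟩
          by_contra hgt
          push_neg at hgt
          have : (u, v) ∈ K := ⟨⟨hu, hv⟩, hgt.le⟩
          rw [hKe] at this
          exact this
        · obtain ⟨pr₀, hpr₀, hmin⟩ := hKcomp.exists_isMinOn hKne hgcont.continuousOn
          have hpr₀Z := hpr₀.1
          have hpr₀d : s₀ ≤ ‖pr₀.1 - pr₀.2‖ := hpr₀.2
          have hρpos : 0 < Real.sqrt (2 * h 0 - 2 * h (‖pr₀.1 - pr₀.2‖ ^ 2)) := by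
            rw [← hgeq _ hpr₀Z.1 _ hpr₀Z.2]
            rw [norm_pos_iff, sub_ne_zero]
            intro heq
            have := hinj _ hpr₀Z.1 _ hpr₀Z.2 heq
            rw [this, sub_self, norm_zero] at hpr₀d
            linarith
          refine ⟨_, hρpos, fun u hu v hv hlt => ?_⟩
          by_contra hgt
          push_neg at hgt
          have hmem : (u, v) ∈ K := ⟨⟨hu, hv⟩, hgt.le⟩
          have hge := hmin hmem
          rw [hgeq u hu v hv] at hlt
          exact absurd (lt_of_le_of_lt hge hlt) (lt_irrefl _)
      obtain ⟨ρ, hρ, hρprop⟩ := hrho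
      -- uniform continuity of γ
      have huc := isCompact_Icc.uniformContinuousOn_of_continuous hγc
      obtain ⟨δ, hδ, hδprop⟩ := Metric.uniformContinuousOn_iff.mp huc ρ hρ
      obtain ⟨n, hn⟩ := exists_nat_one_div_lt hδ
      set N : ℕ := n + 1 with hNdef
      have hN : 0 < (N:ℝ) := by positivity
      have hNδ : 1 / (N:ℝ) < δ := by rw [hNdef]; push_cast; exact hn
      -- the uniform partition
      set P : GeodPartition := ⟨N, fun k => (k:ℝ)/N, by norm_num, by field_simp, by
        intro k _
        push_cast
        gcongr <;> linarith⟩ with hPdef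
      have htk : ∀ k : ℕ, k ≤ N → ((k:ℝ))/N ∈ Icc (0:ℝ) 1 := by
        intro k hk
        constructor
        · positivity
        · rw [div_le_one hN]
          exact_mod_cast hk
      -- choose preimages of the partition points
      have hzex : ∀ k : ℕ, ∃ w, w ∈ Z ∧ φ w = γ (((min k N : ℕ):ℝ)/N) := by
        intro k
        obtain ⟨w, hw, hweq⟩ := hγS _ (htk (min k N) (min_le_right _ _))
        exact ⟨w, hw, hweq⟩
      choose z hzZ hzφ using hzex
      have hzφ' : ∀ k : ℕ, k ≤ N → φ (z k) = γ ((k:ℝ)/N) := by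
        intro k hk
        have := hzφ k
        rwa [min_eq_left hk] at this
      have hz0 : z 0 = x := by
        apply hinj _ (hzZ 0) _ hx
        rw [hzφ' 0 (Nat.zero_le _)]
        simpa using hγ0
      have hzN : z N = y := by
        apply hinj _ (hzZ N) _ hy
        rw [hzφ' N le_rfl, div_self hN.ne']
        exact hγ1
      -- step bounds
      have hstep : ∀ k, k < N → ‖z (k+1) - z k‖ ≤ s₀ := by
        intro k hk
        have hk1 : k + 1 ≤ N := hk
        have hmem1 := htk (k+1) hk1
        have hmem2 := htk k hk.le
        have hdist : dist (((k+1:ℕ):ℝ)/N) ((k:ℝ)/N) < δ := by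
          rw [Real.dist_eq]
          have : ((k+1:ℕ):ℝ)/N - (k:ℝ)/N = 1/N := by push_cast; field_simp; ring
          rw [this, abs_of_nonneg (by positivity)]
          exact hNδ
        have hcl := hδprop _ hmem1 _ hmem2 hdist
        rw [dist_eq_norm, ← hzφ' (k+1) hk1, ← hzφ' k hk.le] at hcl
        exact hρprop _ (hzZ _) _ (hzZ _) hcl
      have hchi : Real.sqrt (c - 2*ε) * ‖x - y‖ ≤ chiSum γ P := by
        have hterm : ∀ k ∈ Finset.range N,
            Real.sqrt (c - 2*ε) * ‖z (k+1) - z k‖ ≤ ‖γ (P.t (k+1)) - γ (P.t k)‖ := by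
          intro k hk
          have hk' := Finset.mem_range.mp hk
          have hsqb : ‖z (k+1) - z k‖ ^ 2 ≤ r₀ := by
            have h1 := hstep k hk'
            nlinarith [Real.sq_sqrt hr₀.le, norm_nonneg (z (k+1) - z k), hs₀.le]
          have := (hch _ (hzZ (k+1)) _ (hzZ k) hsqb).1
          have het1 : γ (P.t (k+1)) = φ (z (k+1)) := (hzφ' (k+1) hk').symm
          have het2 : γ (P.t k) = φ (z k) := (hzφ' k hk'.le).symm
          rw [het1, het2]
          exact this
        calc Real.sqrt (c - 2*ε) * ‖x - y‖
            = Real.sqrt (c - 2*ε) * ‖z N - z 0‖ := by rw [hz0, hzN, norm_sub_rev]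
          _ ≤ Real.sqrt (c - 2*ε) * ∑ k ∈ Finset.range N, ‖z (k+1) - z k‖ := by
              apply mul_le_mul_of_nonneg_left ?_ (Real.sqrt_nonneg _)
              rw [← Finset.sum_range_sub z]
              exact norm_sum_le _ _
          _ = ∑ k ∈ Finset.range N, Real.sqrt (c - 2*ε) * ‖z (k+1) - z k‖ := Finset.mul_sum _ _ _
          _ ≤ ∑ k ∈ Finset.range N, ‖γ (P.t (k+1)) - γ (P.t k)‖ := Finset.sum_le_sum hterm
          _ = chiSum γ P := rfl
      calc ENNReal.ofReal (Real.sqrt (c - 2*ε) * ‖x - y‖)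
          ≤ ENNReal.ofReal (chiSum γ P) := ENNReal.ofReal_le_ofReal hchi
        _ ≤ pathLength γ := le_iSup (fun P => ENNReal.ofReal (chiSum γ P)) P
    -- limit ε → 0⁺
    have htends : Filter.Tendsto (fun ε : ℝ => ENNReal.ofReal (Real.sqrt (c - 2*ε) * ‖x - y‖))
        (nhdsWithin 0 (Ioi 0)) (nhds (ENNReal.ofReal (Real.sqrt c * ‖x - y‖))) := by
      have hcont : Continuous fun ε : ℝ => ENNReal.ofReal (Real.sqrt (c - 2*ε) * ‖x - y‖) :=
        ENNReal.continuous_ofReal.comp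
          ((Real.continuous_sqrt.comp
            (continuous_const.sub (continuous_const.mul continuous_id))).mul continuous_const)
      have h2 := (hcont.tendsto 0).mono_left (nhdsWithin_le_nhds (s := Ioi (0:ℝ)))
      simpa using h2
    refine le_of_tendsto htends ?_
    filter_upwards [self_mem_nhdsWithin] with ε hε using key ε hε
  ---- Combine
  obtain ⟨γ₀, hγ₀path, hγ₀len⟩ := hupper
  apply le_antisymm
  · calc geodesicDist (φ '' Z) (φ x) (φ y)
        ≤ pathLength γ₀ := iInf_le (fun γ : {γ : ℝ → l2 // IsPathIn (φ '' Z) (φ x) (φ y) γ} =>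
          pathLength γ.val) ⟨γ₀, hγ₀path⟩
      _ ≤ ENNReal.ofReal (Real.sqrt c * ‖x - y‖) := hγ₀len
  · exact le_iInf fun γs => hlow γs.1 γs.2
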